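/- Let k > n ≥ 1 and let x^1, x^2, x^3, … be an arbitrary infinite sequence of codes x^m : [n] → [k] (color repetitions allowed). Define recursively: R_0 is the set of all injective codes y : [n] → [k]; for m ≥ 1, b_m := min{ black(σ, x^m) : σ ∈ R_{m−1} } and R_m := { σ ∈ R_{m−1} : black(σ, x^m) = b_m }. Then for every m ≥ 1 the set R_m is nonempty, and b_m < n holds for every m with 1 ≤ m < k. -/
import Mathlib


/-- `black w x` is the number of positions where the codes `w` and `x` coincide. -/
def black {n k : ℕ} (w x : Fin n → Fin k) : ℕ :=
  (Finset.univ.filter fun i => w i = x i).card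

/-- The remaining feasible search space of the adversary codemaker against the
sequence of queries `x^1, x^2, …` (where `x 0` is irrelevant): `Rset x 0` consists of
all injective codes, and `Rset x m` consists of those members of `Rset x (m-1)` whose
answer to the `m`-th query is the smallest possible one. -/
def Rset {n k : ℕ} (x : ℕ → Fin n → Fin k) : ℕ → Set (Fin n → Fin k)
  | 0 => {y | Function.Injective y}
  | m + 1 => {σ ∈ Rset x m |
      black σ (x (m + 1)) =
        sInf ((fun τ : Fin n → Fin k => black τ (x (m + 1))) '' Rset x m)}

/-- `bval x m` is the smallest possible answer `b_m` to the `m`-th query given the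
remaining feasible search space `Rset x (m-1)`. -/
noncomputable def bval {n k : ℕ} (x : ℕ → Fin n → Fin k) (m : ℕ) : ℕ :=
  sInf ((fun τ : Fin n → Fin k => black τ (x m)) '' Rset x (m - 1))

section Aux

variable {n k : ℕ}

lemma black_lt_of_ne {w x : Fin n → Fin k} (h : w ≠ x) : black w x < n := by
  have hne : (Finset.univ.filter fun i => w i = x i) ≠ Finset.univ := by
    intro hcon
    apply h
    funext i
    have : i ∈ Finset.univ.filter fun i => w i = x i := by rw [hcon]; exact Finset.mem_univ i
    exact (Finset.mem_filter.mp this).2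
  have := Finset.card_lt_card (Finset.ssubset_univ_iff.mpr hne)
  simpa [black] using this

lemma mem_Rset_succ {x : ℕ → Fin n → Fin k} {σ : Fin n → Fin k} {t : ℕ} :
    σ ∈ Rset x (t+1) ↔ σ ∈ Rset x t ∧
      black σ (x (t+1)) = sInf ((fun τ : Fin n → Fin k => black τ (x (t+1))) '' Rset x t) :=
  Iff.rfl

lemma bval_succ (x : ℕ → Fin n → Fin k) (t : ℕ) :
    bval x (t+1) = sInf ((fun τ : Fin n → Fin k => black τ (x (t+1))) '' Rset x t) := by
  simp [bval]

lemma Rset_anti (x : ℕ → Fin n → Fin k) : ∀ {s t : ℕ}, s ≤ t → Rset x t ⊆ Rset x s := by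
  intro s t h
  induction t with
  | zero => rw [Nat.le_zero.mp h]
  | succ t ih =>
    rcases Nat.eq_or_lt_of_le h with rfl | h'
    · exact fun _ hσ => hσ
    · exact fun σ hσ => ih (by omega) (mem_Rset_succ.mp hσ).1

lemma Rset_inj {x : ℕ → Fin n → Fin k} {σ : Fin n → Fin k} {t : ℕ} (h : σ ∈ Rset x t) :
    Function.Injective σ := Rset_anti x (Nat.zero_le t) h

lemma Rset_nonempty (hnk : n ≤ k) (x : ℕ → Fin n → Fin k) : ∀ t, (Rset x t).Nonempty
  | 0 => ⟨Fin.castLE hnk, Fin.castLE_injective hnk⟩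
  | t + 1 => by
    have hne : ((fun τ : Fin n → Fin k => black τ (x (t+1))) '' Rset x t).Nonempty :=
      (Rset_nonempty hnk x t).image _
    obtain ⟨σ, hσ, hb⟩ := Nat.sInf_mem hne
    exact ⟨σ, mem_Rset_succ.mpr ⟨hσ, hb⟩⟩

lemma mem_Rset_of_le (x : ℕ → Fin n → Fin k) {σ : Fin n → Fin k} (hσ : Function.Injective σ) :
    ∀ t, (∀ s, s < t → black σ (x (s+1)) ≤ bval x (s+1)) → σ ∈ Rset x t
  | 0, _ => hσ
  | t + 1, h => by
    have hmem : σ ∈ Rset x t := mem_Rset_of_le x hσ t (fun s hs => h s (by omega))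
    refine mem_Rset_succ.mpr ⟨hmem, le_antisymm ?_ ?_⟩
    · rw [← bval_succ]; exact h t (by omega)
    · exact Nat.sInf_le ⟨σ, hmem, rfl⟩

lemma black_eq_bval {x : ℕ → Fin n → Fin k} {σ : Fin n → Fin k} {t : ℕ}
    (h : σ ∈ Rset x (t+1)) : black σ (x (t+1)) = bval x (t+1) := by
  rw [bval_succ]; exact (mem_Rset_succ.mp h).2

lemma exists_min_period {α : Type*} [Fintype α] [DecidableEq α] [Nonempty α] (f : α → α) :
    ∃ j : α, ∃ p : ℕ, 0 < p ∧ f^[p] j = j ∧ ∀ q, 0 < q → q < p → f^[q] j ≠ j := by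
  classical
  have a := Classical.arbitrary α
  have hni : ¬ Function.Injective (fun t : Fin (Fintype.card α + 1) => f^[t.val] a) := by
    intro hinj
    have := Fintype.card_le_of_injective _ hinj
    simp at this
  rw [Function.not_injective_iff] at hni
  obtain ⟨s, t, heq, hne⟩ := hni
  have key : ∃ j : α, ∃ p : ℕ, 0 < p ∧ f^[p] j = j := by
    rcases Nat.lt_or_ge s.val t.val with h | h
    · refine ⟨f^[s.val] a, t.val - s.val, by omega, ?_⟩
      rw [← Function.iterate_add_apply]
      rw [show t.val - s.val + s.val = t.val by omega]
      exact heq.symm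
    · have h' : t.val < s.val := by
        rcases Nat.lt_or_ge t.val s.val with h' | h'
        · exact h'
        · exact absurd (Fin.ext (le_antisymm h' h)) hne
      refine ⟨f^[t.val] a, s.val - t.val, by omega, ?_⟩
      rw [← Function.iterate_add_apply]
      rw [show s.val - t.val + t.val = s.val by omega]
      exact heq
  obtain ⟨j, p, hp, hpj⟩ := key
  have hex : ∃ q, 0 < q ∧ f^[q] j = j := ⟨p, hp, hpj⟩
  refine ⟨j, Nat.find hex, (Nat.find_spec hex).1, (Nat.find_spec hex).2, ?_⟩
  intro q hq hqlt hqj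
  exact (Nat.find_min hex hqlt) ⟨hq, hqj⟩

lemma exists_rotation {α : Type*} [Fintype α] [DecidableEq α] [Nonempty α] (f : α → α) :
    ∃ (C : Finset α) (g : α → α), C.Nonempty ∧ Function.Injective g ∧
      (∀ a ∈ C, f a ∈ C) ∧ (∀ a ∈ C, g a = f a) ∧ (∀ a ∉ C, g a = a) := by
  classical
  obtain ⟨j, p, hp, hpj, hmin⟩ := exists_min_period f
  set C : Finset α := (Finset.range p).image (fun r => f^[r] j) with hC
  have hjC : j ∈ C := by
    apply Finset.mem_image.mpr
    exact ⟨0, Finset.mem_range.mpr hp, rfl⟩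
  have hclosed : ∀ a ∈ C, f a ∈ C := by
    intro a ha
    obtain ⟨r, hr, rfl⟩ := Finset.mem_image.mp ha
    rw [Finset.mem_range] at hr
    have : f (f^[r] j) = f^[r+1] j := (Function.iterate_succ_apply' f r j).symm
    rw [this]
    rcases Nat.lt_or_ge (r+1) p with h | h
    · exact Finset.mem_image.mpr ⟨r+1, Finset.mem_range.mpr h, rfl⟩
    · have : r + 1 = p := by omega
      rw [this, hpj]
      exact hjC
  have hinjC : ∀ a ∈ C, ∀ b ∈ C, f a = f b → a = b := by
    intro a ha b hb hab
    obtain ⟨r, hr, rfl⟩ := Finset.mem_image.mp ha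
    obtain ⟨r', hr', rfl⟩ := Finset.mem_image.mp hb
    rw [Finset.mem_range] at hr hr'
    have main : ∀ r r' : ℕ, r < p → r' < p → r ≤ r' →
        f (f^[r] j) = f (f^[r'] j) → f^[r] j = f^[r'] j := by
      intro r r' hr hr' hle hab
      rcases Nat.eq_or_lt_of_le hle with rfl | hlt
      · rfl
      · exfalso
        have h1 : f^[r+1] j = f^[r'+1] j := by
          rw [Function.iterate_succ_apply' f r j, Function.iterate_succ_apply' f r' j]
          exact hab
        have h2 := congrArg (f^[p - 1 - r']) h1
        rw [← Function.iterate_add_apply, ← Function.iterate_add_apply] at h2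
        rw [show (p - 1 - r') + (r'+1) = p by omega] at h2
        rw [hpj] at h2
        exact hmin ((p - 1 - r') + (r+1)) (by omega) (by omega) h2
    rcases Nat.le_total r r' with h | h
    · exact main r r' hr hr' h hab
    · exact (main r' r hr' hr h hab.symm).symm
  set g : α → α := fun a => if a ∈ C then f a else a with hg
  have hginj : Function.Injective g := by
    intro a b hab
    simp only [hg] at hab
    by_cases haC : a ∈ C <;> by_cases hbC : b ∈ C
    · rw [if_pos haC, if_pos hbC] at hab
      exact hinjC a haC b hbC hab
    · rw [if_pos haC, if_neg hbC] at hab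
      exact absurd (hab ▸ hclosed a haC) hbC
    · rw [if_neg haC, if_pos hbC] at hab
      exact absurd (hab.symm ▸ hclosed b hbC) haC
    · rw [if_neg haC, if_neg hbC] at hab
      exact hab
  exact ⟨C, g, ⟨j, hjC⟩, hginj, hclosed, fun a ha => if_pos ha, fun a ha => if_neg ha⟩

lemma exists_perturb (hn : 1 ≤ n) (hnk : n < k) (σ : Fin n → Fin k)
    (hσ : Function.Injective σ) (c : Fin n → Fin k) (hc : ∀ i, c i ≠ σ i) :
    ∃ σ' : Fin n → Fin k, Function.Injective σ' ∧ σ' ≠ σ ∧ ∀ i, σ' i = σ i ∨ σ' i = c i := by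
  classical
  have hk0 : 0 < k := by omega
  have : Nonempty (Fin k) := ⟨⟨0, hk0⟩⟩
  set i₀ : Fin n := ⟨0, hn⟩ with hi₀
  set f : Fin k → Fin k := fun d => if hd : ∃ i, σ i = d then c hd.choose else σ i₀ with hf
  have hfσ : ∀ i, f (σ i) = c i := by
    intro i
    have hd : ∃ i', σ i' = σ i := ⟨i, rfl⟩
    rw [hf]
    simp only
    rw [dif_pos hd]
    congr 1
    exact hσ hd.choose_spec
  have hfne : ∀ d, f d ≠ d := by
    intro d
    rw [hf]
    simp only
    split_ifs with hd
    · intro hcon; exact hc hd.choose (hcon.trans hd.choose_spec.symm)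
    · intro hcon; exact hd ⟨i₀, hcon⟩
  obtain ⟨C, g, hCne, hginj, hclosed, hgC, hgnC⟩ := exists_rotation f
  refine ⟨g ∘ σ, hginj.comp hσ, ?_, ?_⟩
  · have hiC : ∃ i, σ i ∈ C := by
      obtain ⟨d, hd⟩ := hCne
      by_cases hdr : ∃ i, σ i = d
      · obtain ⟨i, rfl⟩ := hdr; exact ⟨i, hd⟩
      · have hfd : f d = σ i₀ := by rw [hf]; simp only; rw [dif_neg hdr]
        exact ⟨i₀, hfd ▸ hclosed d hd⟩
    obtain ⟨i, hi⟩ := hiC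
    intro hcon
    have h2 : g (σ i) = σ i := congrFun hcon i
    rw [hgC _ hi] at h2
    exact hfne (σ i) h2
  · intro i
    by_cases hiC : σ i ∈ C
    · right; show g (σ i) = c i; rw [hgC _ hiC, hfσ]
    · left; exact hgnC _ hiC

end Aux

theorem stmt11 (n k : ℕ) (hn : 1 ≤ n) (hk : n < k) (x : ℕ → Fin n → Fin k)
    (m : ℕ) (hm : 1 ≤ m) :
    (Rset x m).Nonempty ∧ (m < k → bval x m < n) := by
  classical
  have hnk : n ≤ k := hk.le
  constructor
  · exact Rset_nonempty hnk x m
  · intro hmk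
    obtain ⟨M, rfl⟩ : ∃ M, m = M + 1 := ⟨m - 1, by omega⟩
    obtain ⟨σs, hσs⟩ := Rset_nonempty hnk x M
    have hσsinj := Rset_inj hσs
    have hcex : ∀ i : Fin n, ∃ cc : Fin k, cc ≠ σs i ∧ ∀ j, 1 ≤ j → j ≤ M → x j i ≠ cc := by
      intro i
      set bad : Finset (Fin k) := insert (σs i) ((Finset.Icc 1 M).image fun j => x j i) with hbad
      have hcard : bad.card < k := by
        calc bad.card ≤ ((Finset.Icc 1 M).image fun j => x j i).card + 1 :=
              Finset.card_insert_le _ _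
          _ ≤ (Finset.Icc 1 M).card + 1 := by gcongr; exact Finset.card_image_le
          _ ≤ M + 1 := by rw [Nat.card_Icc]; omega
          _ < k := hmk
      have hcompl : badᶜ.Nonempty := by
        rw [← Finset.card_pos, Finset.card_compl]
        simp only [Fintype.card_fin]
        omega
      obtain ⟨cc, hcc⟩ := hcompl
      rw [Finset.mem_compl, hbad, Finset.mem_insert] at hcc
      push_neg at hcc
      exact ⟨cc, hcc.1, fun j h1 h2 hcon =>
        hcc.2 (Finset.mem_image.mpr ⟨j, Finset.mem_Icc.mpr ⟨h1, h2⟩, hcon⟩)⟩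
    choose c hc1 hc2 using hcex
    obtain ⟨σ', hinj', hne', hor'⟩ := exists_perturb hn hk σs hσsinj c hc1
    have hble : ∀ j, 1 ≤ j → j ≤ M → black σ' (x j) ≤ black σs (x j) := by
      intro j h1 h2
      apply Finset.card_le_card
      intro i hi
      rw [Finset.mem_filter] at hi ⊢
      refine ⟨hi.1, ?_⟩
      rcases hor' i with h | h
      · rw [← h]; exact hi.2
      · exact absurd (hi.2.symm.trans h) (hc2 i j h1 h2)
    have hσ'M : σ' ∈ Rset x M := by
      apply mem_Rset_of_le x hinj'
      intro s hs
      have h1 : σs ∈ Rset x (s+1) := Rset_anti x (by omega) hσs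
      calc black σ' (x (s+1)) ≤ black σs (x (s+1)) := hble (s+1) (by omega) (by omega)
        _ = bval x (s+1) := black_eq_bval h1
    have hb1 : bval x (M+1) ≤ black σ' (x (M+1)) := by
      rw [bval_succ]; exact Nat.sInf_le ⟨σ', hσ'M, rfl⟩
    have hb2 : bval x (M+1) ≤ black σs (x (M+1)) := by
      rw [bval_succ]; exact Nat.sInf_le ⟨σs, hσs, rfl⟩
    by_cases hq : σs = x (M+1)
    · have hσ'ne : σ' ≠ x (M+1) := fun h => hne' (h.trans hq.symm)
      exact lt_of_le_of_lt hb1 (black_lt_of_ne hσ'ne)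
    · exact lt_of_le_of_lt hb2 (black_lt_of_ne hq)
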